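/- Let P be an (m+1)-term complex of finitely generated projective A-modules. Then T(P) is closed under m-factors (Fac_m(T(P))⊆T(P)) and F(P) is closed under m-subobjects (Sub_m(F(P))⊆F(P)). -/

import Mathlib

open CategoryTheory Limits Pretriangulated Triangulated

variable {k : Type*} [Field k]
variable {D : Type*} [Category D] [Preadditive D] [CategoryTheory.Linear k D]
  [HasZeroObject D] [HasShift D ℤ] [∀ n : ℤ, (shiftFunctor D n).Additive]
  [Pretriangulated D] [HasFiniteBiproducts D]

/-- `star S T` consists of the objects `Z` admitting a distinguished triangle
`X → Z → Y → X⟦1⟧` with `X ∈ S` and `Y ∈ T`. -/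
def star (S T : Set D) : Set D :=
  {Z | ∃ (X Y : D) (f : X ⟶ Z) (g : Z ⟶ Y) (h : Y ⟶ X⟦(1 : ℤ)⟧),
    (Triangle.mk f g h ∈ distTriang D) ∧ X ∈ S ∧ Y ∈ T}

/-- `addHull M` is the additive hull `add M` of `M`: all direct summands of
finite direct sums of copies of `M`. -/
def addHull (M : D) : Set D :=
  {X | ∃ (n : ℕ) (i : X ⟶ ⨁ fun _ : Fin n => M) (r : (⨁ fun _ : Fin n => M) ⟶ X),
    i ≫ r = 𝟙 X}

/-- `X` is a projective object of the extension-closed subcategory `E`,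
i.e. `X ∈ E` and `Hom(X, Y⟦1⟧) = 0` for all `Y ∈ E`. -/
def ProjIn (E : Set D) (X : D) : Prop :=
  X ∈ E ∧ ∀ Y ∈ E, ∀ f : X ⟶ Y⟦(1 : ℤ)⟧, f = 0

/-- `X` is an injective object of the extension-closed subcategory `E`,
i.e. `X ∈ E` and `Hom(Y, X⟦1⟧) = 0` for all `Y ∈ E`. -/
def InjIn (E : Set D) (X : D) : Prop :=
  X ∈ E ∧ ∀ Y ∈ E, ∀ f : Y ⟶ X⟦(1 : ℤ)⟧, f = 0

/-- An axiomatization of the bounded derived category `D = D^b(mod A)` of a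
finite-dimensional algebra `A` over the field `k`, recording:

* the canonical (bounded) t-structure `t`, with truncation functions
  `trLE n = σ^{≤ n}` and `trGE n = σ^{≥ n}` (characterized by the usual
  truncation triangles);
* the classes `projC a b` (resp. `injC a b`) of objects isomorphic in
  `D^b(mod A)` to a complex of finitely generated projective (resp. injective)
  modules concentrated in cohomological degrees `[a, b]`, together with the
  basic properties of such complexes (cohomological amplitude, vanishing of
  maps to sufficiently negative (resp. from sufficiently positive) objects,
  behaviour under shifts, direct sums and summands);
* the object `AA` corresponding to the free module `A`, which additively
  generates `projC 0 0 = proj A`, and `nakF AA = νA = DA` generating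
  `injC 0 0 = inj A`;
* the Nakayama functor, recorded through its value function `nakF` on objects
  of `K^b(proj A)` (with quasi-inverse value function `nakInvF`), together
  with the Nakayama duality `Hom(X, Y) ≅ D Hom(Y, νX)`, `D = Hom_k(-, k)`,
  natural in `Y`;
* the minimal projective presentation function `pm m`, where `pm m Z` is the
  stupid truncation `σ_{≥ -m}` of a minimal projective resolution of
  `Z ∈ m-mod A` (an object of `K^{[-m,0]}(proj A)` with
  `H^{[-(m-1),0]}(pm m Z) ≅ Z` having no direct summand of the form `Q⟦m⟧`
  with `Q ∈ proj A`), and dually the minimal injective presentation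
  function `im m`. -/
structure ExtModSetting (k : Type*) [Field k] (D : Type*) [Category D]
    [Preadditive D] [CategoryTheory.Linear k D] [HasZeroObject D] [HasShift D ℤ]
    [∀ n : ℤ, (shiftFunctor D n).Additive] [Pretriangulated D]
    [HasFiniteBiproducts D] : Type _ where
  t : TStructure D
  bounded : ∀ X : D, ∃ a b : ℤ, t.ge a X ∧ t.le b X
  homFinite : ∀ X Y : D, FiniteDimensional k (X ⟶ Y)
  trLE : ℤ → D → D
  trLE_le : ∀ (n : ℤ) (X : D), t.le n (trLE n X)
  trLE_triangle : ∀ (n : ℤ) (X : D), ∃ (W : D) (f : trLE n X ⟶ X) (g : X ⟶ W)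
    (h : W ⟶ (trLE n X)⟦(1 : ℤ)⟧),
    (Triangle.mk f g h ∈ distTriang D) ∧ t.ge (n + 1) W
  trGE : ℤ → D → D
  trGE_ge : ∀ (n : ℤ) (X : D), t.ge n (trGE n X)
  trGE_triangle : ∀ (n : ℤ) (X : D), ∃ (W : D) (f : W ⟶ X) (g : X ⟶ trGE n X)
    (h : trGE n X ⟶ W⟦(1 : ℤ)⟧),
    (Triangle.mk f g h ∈ distTriang D) ∧ t.le (n - 1) W
  projC : ℤ → ℤ → Set D
  injC : ℤ → ℤ → Set D
  projC_iso : ∀ (a b : ℤ) (X Y : D), X ∈ projC a b → (X ≅ Y) → Y ∈ projC a b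
  injC_iso : ∀ (a b : ℤ) (X Y : D), X ∈ injC a b → (X ≅ Y) → Y ∈ injC a b
  projC_mono : ∀ a a' b b' : ℤ, a' ≤ a → b ≤ b' → projC a b ⊆ projC a' b'
  injC_mono : ∀ a a' b b' : ℤ, a' ≤ a → b ≤ b' → injC a b ⊆ injC a' b'
  projC_amp : ∀ (a b : ℤ) (X : D), X ∈ projC a b → t.ge a X ∧ t.le b X
  injC_amp : ∀ (a b : ℤ) (X : D), X ∈ injC a b → t.ge a X ∧ t.le b X
  projC_shift : ∀ (a b n : ℤ) (X : D), X ∈ projC a b → X⟦n⟧ ∈ projC (a - n) (b - n)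
  injC_shift : ∀ (a b n : ℤ) (X : D), X ∈ injC a b → X⟦n⟧ ∈ injC (a - n) (b - n)
  projC_sum : ∀ (a b : ℤ) (X Y : D), X ∈ projC a b → Y ∈ projC a b → (X ⊞ Y) ∈ projC a b
  injC_sum : ∀ (a b : ℤ) (X Y : D), X ∈ injC a b → Y ∈ injC a b → (X ⊞ Y) ∈ injC a b
  projC_summand : ∀ (a b : ℤ) (X Y : D), Y ∈ projC a b →
    (∃ (i : X ⟶ Y) (r : Y ⟶ X), i ≫ r = 𝟙 X) → X ∈ projC a b
  injC_summand : ∀ (a b : ℤ) (X Y : D), Y ∈ injC a b →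
    (∃ (i : X ⟶ Y) (r : Y ⟶ X), i ≫ r = 𝟙 X) → X ∈ injC a b
  projC_vanish : ∀ (a b : ℤ) (X Y : D), X ∈ projC a b → t.le (a - 1) Y →
    ∀ f : X ⟶ Y, f = 0
  injC_vanish : ∀ (a b : ℤ) (X Y : D), Y ∈ injC a b → t.ge (b + 1) X →
    ∀ f : X ⟶ Y, f = 0
  AA : D
  AA_mem : AA ∈ projC 0 0
  projC_zero_zero : ∀ X : D, X ∈ projC 0 0 ↔ X ∈ addHull AA
  nakF : D → D
  nakF_mem : ∀ (a b : ℤ) (X : D), X ∈ projC a b → nakF X ∈ injC a b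
  injC_zero_zero : ∀ X : D, X ∈ injC 0 0 ↔ X ∈ addHull (nakF AA)
  nakInvF : D → D
  nakInvF_mem : ∀ (a b : ℤ) (Y : D), Y ∈ injC a b → nakInvF Y ∈ projC a b
  nakF_nakInvF : ∀ (a b : ℤ) (Y : D), Y ∈ injC a b → Nonempty (nakF (nakInvF Y) ≅ Y)
  nakDuality : ∀ X : D, (∃ a b : ℤ, X ∈ projC a b) →
    ∃ e : ∀ Y : D, (X ⟶ Y) ≃ₗ[k] Module.Dual k (Y ⟶ nakF X),
      ∀ (Y Y' : D) (v : Y ⟶ Y') (u : X ⟶ Y) (g : Y' ⟶ nakF X),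
        e Y' (u ≫ v) g = e Y u (v ≫ g)
  pm : ℤ → D → D
  pm_mem : ∀ (m : ℤ) (Z : D), 1 ≤ m → t.le 0 Z → t.ge (1 - m) Z →
    pm m Z ∈ projC (-m) 0
  pm_triangle : ∀ (m : ℤ) (Z : D), 1 ≤ m → t.le 0 Z → t.ge (1 - m) Z →
    ∃ (W : D) (f : W ⟶ pm m Z) (g : pm m Z ⟶ Z) (h : Z ⟶ W⟦(1 : ℤ)⟧),
      (Triangle.mk f g h ∈ distTriang D) ∧ t.le (-m) W ∧ t.ge (-m) W
  pm_minimal : ∀ (m : ℤ) (Z : D), 1 ≤ m → t.le 0 Z → t.ge (1 - m) Z →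
    ∀ Q : D, Q ∈ projC 0 0 →
      (∃ (i : Q⟦m⟧ ⟶ pm m Z) (r : pm m Z ⟶ Q⟦m⟧), i ≫ r = 𝟙 (Q⟦m⟧)) → IsZero Q
  im : ℤ → D → D
  im_mem : ∀ (m : ℤ) (Z : D), 1 ≤ m → t.le 0 Z → t.ge (1 - m) Z →
    im m Z ∈ injC (1 - m) 1
  im_triangle : ∀ (m : ℤ) (Z : D), 1 ≤ m → t.le 0 Z → t.ge (1 - m) Z →
    ∃ (f : Z ⟶ im m Z) (W : D) (g : im m Z ⟶ W) (h : W ⟶ Z⟦(1 : ℤ)⟧),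
      (Triangle.mk f g h ∈ distTriang D) ∧ t.le 1 W ∧ t.ge 1 W
  im_minimal : ∀ (m : ℤ) (Z : D), 1 ≤ m → t.le 0 Z → t.ge (1 - m) Z →
    ∀ I : D, I ∈ injC 0 0 →
      (∃ (i : I⟦(-1 : ℤ)⟧ ⟶ im m Z) (r : im m Z ⟶ I⟦(-1 : ℤ)⟧),
        i ≫ r = 𝟙 (I⟦(-1 : ℤ)⟧)) → IsZero I

namespace ExtModSetting

variable (S : ExtModSetting k D)

/-- The `m`-extended module category
`m-mod A = {X ∈ D^b(mod A) | Hᵢ(X) = 0 for i ∉ [-(m-1), 0]}`. -/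
def emod (m : ℕ) : Set D := {X | S.t.le 0 X ∧ S.t.ge (1 - (m : ℤ)) X}

/-- The truncation `H^{[p,q]} = σ^{≥ p} ∘ σ^{≤ q}`. -/
def hTr (p q : ℤ) (X : D) : D := S.trGE p (S.trLE q X)

/-- `Fac S m 𝒳 n` is the class of `n`-factors of `𝒳` inside `m-mod A`. -/
def Fac (m : ℕ) (𝒳 : Set D) : ℕ → Set D
  | 0 => S.emod m
  | n + 1 =>
    {Z | Z ∈ S.emod m ∧ ∃ (Z₁ X₁ : D) (f : Z₁ ⟶ X₁) (g : X₁ ⟶ Z) (h : Z ⟶ Z₁⟦(1 : ℤ)⟧),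
      (Triangle.mk f g h ∈ distTriang D) ∧ X₁ ∈ 𝒳 ∧ Z₁ ∈ Fac m 𝒳 n}

/-- `SubObj S m 𝒳 n` is the class of `n`-subobjects of `𝒳` inside `m-mod A`. -/
def SubObj (m : ℕ) (𝒳 : Set D) : ℕ → Set D
  | 0 => S.emod m
  | n + 1 =>
    {Z | Z ∈ S.emod m ∧ ∃ (X₁ Z₁ : D) (f : Z ⟶ X₁) (g : X₁ ⟶ Z₁) (h : Z₁ ⟶ Z⟦(1 : ℤ)⟧),
      (Triangle.mk f g h ∈ distTriang D) ∧ X₁ ∈ 𝒳 ∧ Z₁ ∈ SubObj m 𝒳 n}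

/-- `T(P) = {X ∈ m-mod A | Hom(P, X[j]) = 0 for all j ≥ 1}`. -/
def TP (m : ℕ) (P : D) : Set D :=
  {X | X ∈ S.emod m ∧ ∀ j : ℤ, 1 ≤ j → ∀ f : P ⟶ X⟦j⟧, f = 0}

/-- `F(P) = {X ∈ m-mod A | Hom(P, X[j]) = 0 for all j ≤ 0}`. -/
def FP (m : ℕ) (P : D) : Set D :=
  {X | X ∈ S.emod m ∧ ∀ j : ℤ, j ≤ 0 → ∀ f : P ⟶ X⟦j⟧, f = 0}

/-- A complex is presilting if `Hom(P, P[j]) = 0` for all `j > 0`. -/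
def Presilting (P : D) : Prop := ∀ j : ℤ, 0 < j → ∀ f : P ⟶ P⟦j⟧, f = 0

/-- The objects of `K^b(proj A)`. -/
def Kb : Set D := {X | ∃ a b : ℤ, X ∈ S.projC a b}

/-- A thick subcategory: closed under isomorphisms, shifts, extensions
(hence cones) and direct summands. -/
def IsThickSub (T : Set D) : Prop :=
  (∀ X Y : D, X ∈ T → (X ≅ Y) → Y ∈ T) ∧
  (∀ (X : D) (n : ℤ), X ∈ T → X⟦n⟧ ∈ T) ∧
  (∀ (X Y Z : D) (f : X ⟶ Y) (g : Y ⟶ Z) (h : Z ⟶ X⟦(1 : ℤ)⟧),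
    (Triangle.mk f g h ∈ distTriang D) → X ∈ T → Z ∈ T → Y ∈ T) ∧
  (∀ X Y : D, Y ∈ T → (∃ (i : X ⟶ Y) (r : Y ⟶ X), i ≫ r = 𝟙 X) → X ∈ T)

/-- A presilting complex is silting if the smallest thick subcategory
containing it is all of `K^b(proj A)`. -/
def Silting (P : D) : Prop :=
  Presilting P ∧ ∀ T : Set D, IsThickSub T → P ∈ T → S.Kb ⊆ T

/-- A torsion pair in `m-mod A`. -/
structure IsTorsionPair (m : ℕ) (T F : Set D) : Prop where
  subsetT : T ⊆ S.emod m
  subsetF : F ⊆ S.emod m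
  hom_zero : ∀ X ∈ T, ∀ Y ∈ F, ∀ f : X ⟶ Y, f = 0
  heart_eq : S.emod m = star T F

/-- An s-torsion pair in `m-mod A`. -/
structure IsSTorsionPair (m : ℕ) (T F : Set D)
    extends S.IsTorsionPair m T F : Prop where
  hom_neg_one_zero : ∀ X ∈ T, ∀ Y ∈ F, ∀ f : X ⟶ Y⟦(-1 : ℤ)⟧, f = 0

/-- The Auslander-Reiten translation
`τ_[m](Z) = σ^{≤ 0}(ν p_m(Z)[-1])` of `m-mod A`. -/
def tau (m : ℕ) (Z : D) : D := S.trLE 0 ((S.nakF (S.pm (m : ℤ) Z))⟦(-1 : ℤ)⟧)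

/-- The inverse Auslander-Reiten translation
`τ_[m]⁻(Z) = σ^{≥ -(m-1)}(ν⁻ i_m(Z)[1])` of `m-mod A`. -/
def tauInv (m : ℕ) (Z : D) : D := S.trGE (1 - (m : ℤ)) ((S.nakInvF (S.im (m : ℤ) Z))⟦(1 : ℤ)⟧)

end ExtModSetting

section Pretriangulated

variable {C : Type*} [Category C] [Preadditive C] [HasShift C ℤ]

lemma hom_shift_shift_eq_zero {P Z : C} {a b : ℤ} (h : ∀ u : P ⟶ Z⟦a + b⟧, u = 0)
    (u : P ⟶ Z⟦a⟧⟦b⟧) : u = 0 := by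
  let e := (shiftFunctorAdd C a b).app Z
  calc u = (u ≫ e.inv) ≫ e.hom := by simp
    _ = 0 := by rw [h (u ≫ e.inv), zero_comp]

variable [HasZeroObject C] [∀ n : ℤ, (shiftFunctor C n).Additive] [Pretriangulated C]

lemma hom_shift_obj₃_eq_zero {P Z₁ X Z : C} {f : Z₁ ⟶ X} {g : X ⟶ Z} {h : Z ⟶ Z₁⟦(1 : ℤ)⟧}
    (hT : Triangle.mk f g h ∈ distTriang C) {j : ℤ} (hX : ∀ u : P ⟶ X⟦j⟧, u = 0)
    (hZ₁ : ∀ u : P ⟶ Z₁⟦j + 1⟧, u = 0) (u : P ⟶ Z⟦j⟧) : u = 0 := by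
  have hTj := Triangle.shift_distinguished _ hT j
  obtain ⟨v, rfl⟩ := Triangle.coyoneda_exact₃ _ hTj u (hom_shift_shift_eq_zero hZ₁ _)
  rw [hX v]; exact zero_comp

lemma hom_shift_obj₁_eq_zero {P Z X Z₁ : C} {f : Z ⟶ X} {g : X ⟶ Z₁} {h : Z₁ ⟶ Z⟦(1 : ℤ)⟧}
    (hT : Triangle.mk f g h ∈ distTriang C) {j : ℤ} (hX : ∀ u : P ⟶ X⟦j⟧, u = 0)
    (hZ₁ : ∀ u : P ⟶ Z₁⟦j + -1⟧, u = 0) (u : P ⟶ Z⟦j⟧) : u = 0 := by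
  have hTj := inv_rot_of_distTriang _ (Triangle.shift_distinguished _ hT j)
  obtain ⟨v, rfl⟩ := Triangle.coyoneda_exact₂ _ hTj u (hX _)
  rw [hom_shift_shift_eq_zero hZ₁ v]; exact zero_comp

lemma CategoryTheory.Triangulated.TStructure.hom_shift_eq_zero (t : TStructure C) {P Z : C}
    {b c j : ℤ} (hP : t.le b P) (hZ : t.ge c Z) (hj : j + b < c) (u : P ⟶ Z⟦j⟧) : u = 0 :=
  t.zero_of_isLE_of_isGE u b (c - j) (by omega) ⟨hP⟩ ⟨t.ge_shift c j (c - j) (by omega) Z hZ⟩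

end Pretriangulated

namespace ExtModSetting

variable (S : ExtModSetting k D) {m : ℕ}

lemma mem_emod_of_mem_Fac {𝒳 : Set D} {Z : D} : ∀ {n : ℕ}, Z ∈ S.Fac m 𝒳 n → Z ∈ S.emod m
  | 0, hZ => hZ
  | _ + 1, hZ => hZ.1

lemma mem_emod_of_mem_SubObj {𝒳 : Set D} {Z : D} :
    ∀ {n : ℕ}, Z ∈ S.SubObj m 𝒳 n → Z ∈ S.emod m
  | 0, hZ => hZ
  | _ + 1, hZ => hZ.1

lemma projC_hom_shift_eq_zero {P Z : D} {a b c j : ℤ} (hP : P ∈ S.projC a b) (hZ : S.t.le c Z)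
    (hj : c < a + j) (u : P ⟶ Z⟦j⟧) : u = 0 :=
  S.projC_vanish a b P _ hP
    (S.t.le_monotone (by omega) _ (S.t.le_shift c j (c - j) (by omega) Z hZ)) u

lemma hom_shift_eq_zero_of_mem_Fac {P : D} {a b : ℤ} (hP : P ∈ S.projC a b) {𝒳 : Set D}
    (h𝒳 : ∀ X ∈ 𝒳, ∀ j : ℤ, 1 ≤ j → ∀ u : P ⟶ X⟦j⟧, u = 0) :
    ∀ (n : ℕ) {Z : D}, Z ∈ S.Fac m 𝒳 n → ∀ j : ℤ, 1 ≤ j → 0 < a + j + n → ∀ u : P ⟶ Z⟦j⟧, u = 0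
  | 0, _, hZ, _, _, hj => S.projC_hom_shift_eq_zero hP hZ.1 (by simpa using hj)
  | n + 1, _, ⟨_, _, X, _, _, _, hT, hX, hZ₁⟩, j, hj, hjn =>
    hom_shift_obj₃_eq_zero hT (h𝒳 X hX j hj)
      (hom_shift_eq_zero_of_mem_Fac hP h𝒳 n hZ₁ (j + 1) (by omega) (by push_cast at hjn; omega))

lemma hom_shift_eq_zero_of_mem_SubObj {P : D} {b : ℤ} (hP : S.t.le b P) {𝒳 : Set D}
    (h𝒳 : ∀ X ∈ 𝒳, ∀ j : ℤ, j ≤ 0 → ∀ u : P ⟶ X⟦j⟧, u = 0) :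
    ∀ (n : ℕ) {Z : D}, Z ∈ S.SubObj m 𝒳 n →
      ∀ j : ℤ, j ≤ 0 → j + b + m ≤ n → ∀ u : P ⟶ Z⟦j⟧, u = 0
  | 0, _, hZ, _, _, hj => S.t.hom_shift_eq_zero hP hZ.2 (by push_cast at hj; omega)
  | n + 1, _, ⟨_, X, _, _, _, _, hT, hX, hZ₁⟩, j, hj, hjn =>
    hom_shift_obj₁_eq_zero hT (h𝒳 X hX j hj)
      (hom_shift_eq_zero_of_mem_SubObj hP h𝒳 n hZ₁ (j + -1) (by omega)
        (by push_cast at hjn; omega))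

end ExtModSetting

theorem stmt8_general (S : ExtModSetting k D) (m : ℕ)
    (P : D) (hP : P ∈ S.projC (-(m : ℤ)) 0) :
    S.Fac m (S.TP m P) m ⊆ S.TP m P ∧ S.SubObj m (S.FP m P) m ⊆ S.FP m P := by
  constructor
  · intro Z hZ
    exact ⟨S.mem_emod_of_mem_Fac hZ, fun j hj =>
      S.hom_shift_eq_zero_of_mem_Fac hP (fun X hX => hX.2) m hZ j hj (by omega)⟩
  · intro Z hZ
    exact ⟨S.mem_emod_of_mem_SubObj hZ, fun j hj =>
      S.hom_shift_eq_zero_of_mem_SubObj (S.projC_amp _ _ _ hP).2 (fun X hX => hX.2) m hZ j hj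
        (by omega)⟩

theorem stmt8 (S : ExtModSetting k D) (m : ℕ) (hm : 0 < m)
    (P : D) (hP : P ∈ S.projC (-(m : ℤ)) 0) :
    S.Fac m (S.TP m P) m ⊆ S.TP m P ∧ S.SubObj m (S.FP m P) m ⊆ S.FP m P :=
  stmt8_general S m P hP
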